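/- arXiv:2107.04828 — 2 statements merged into one kernel-verified Lean document; each statement's English description precedes it below -/
import Mathlib

section
/- Let (K,ν) be a valued field and ω a value transcendental extension of ν to K(x) with minimal pair of definition (a,γ); let Q ∈ K[x] be the minimal polynomial of a over K and ω̄ = ν̄_{a,γ} the corresponding common extension of ω and ν̄ to K̄(x). Then: (1) ωQ ∉ ν̄K̄; (2) for every g ∈ K[x] with deg g < deg Q, ωg = ν̄g(a); (3) for every f ∈ K[x] with Q-expansion f = f₀ + f₁Q + ⋯ + f_rQ^r (deg fᵢ < deg Q), ωf = minᵢ(ν̄fᵢ(a) + i ωQ). -/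
/- ---------------------------------------------------------------------------
Common definitions for formalizing "Minimal pairs, minimal fields and
implicit constant fields" (Dutta).

Valuations are formalized additively, as `AddValuation F (WithTop Γ)` where
`Γ` is a linearly ordered abelian group; the value `⊤` plays the role of the
value `∞` of `0`.  The algebraic closure `K̄` of `K` is `AlgebraicClosure K`,
the rational function field `K(x)` is `RatFunc K`, and a fixed algebraic
closure of `K̄(x)` (equivalently, of `K(x)`) is
`Lhat K := AlgebraicClosure (RatFunc (AlgebraicClosure K))`.
--------------------------------------------------------------------------- -/

noncomputable section

open Polynomial

namespace VT

/-- The canonical embedding of the rational function field `K(x)` into `K̄(x)`. -/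
def liftRF (K : Type) [Field K] : RatFunc K →+* RatFunc (AlgebraicClosure K) :=
  RatFunc.mapRingHom (Polynomial.mapRingHom (algebraMap K (AlgebraicClosure K)))
    (by
      intro p hp
      simp only [Submonoid.mem_comap, Polynomial.coe_mapRingHom]
      rw [mem_nonZeroDivisors_iff_ne_zero] at hp ⊢
      rw [Ne, Polynomial.map_eq_zero_iff (algebraMap K (AlgebraicClosure K)).injective]
      exact hp)

variable {K : Type} [Field K] {Γ : Type} [AddCommGroup Γ] [LinearOrder Γ] [IsOrderedAddMonoid Γ]

/-- `w` extends the valuation `v` along the field embedding `g`. -/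
def Extends {A B : Type} [Field A] [Field B] (g : A →+* B)
    (v : AddValuation A (WithTop Γ)) (w : AddValuation B (WithTop Γ)) : Prop :=
  ∀ x, w (g x) = v x

/-- `W` is the monomial valuation `ν̄_{a,γ}` on `K̄(x)` attached to `a ∈ K̄` and `γ ∈ Γ`:
on a polynomial `p = Σᵢ cᵢ (x-a)ⁱ` its value is `minᵢ (ν̄ cᵢ + iγ)`.  (A valuation on
`K̄(x)` is determined by its restriction to polynomials.)  In particular `W` extends
the valuation `ν̄ = vbar` of `K̄`. -/
def IsMonomialVal (vbar : AddValuation (AlgebraicClosure K) (WithTop Γ))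
    (W : AddValuation (RatFunc (AlgebraicClosure K)) (WithTop Γ))
    (a : AlgebraicClosure K) (γ : Γ) : Prop :=
  ∀ p : Polynomial (AlgebraicClosure K),
    W (algebraMap (Polynomial (AlgebraicClosure K)) (RatFunc (AlgebraicClosure K)) p) =
      (Finset.range (p.natDegree + 1)).inf
        (fun i => vbar ((Polynomial.taylor a p).coeff i) + i • (γ : WithTop Γ))

/-- The degree `[K(a):K]` of an element `a` of the algebraic closure of `K`. -/
def degOver (K : Type) [Field K] (a : AlgebraicClosure K) : ℕ := (minpoly K a).natDegree

/-- `(a,γ)` is a pair of definition for the valuation `ω` on `K(x)`:  some common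
extension of `ω` and `ν̄ = vbar` to `K̄(x)` is the monomial valuation `ν̄_{a,γ}`. -/
def IsPairOfDef (vbar : AddValuation (AlgebraicClosure K) (WithTop Γ))
    (ω : AddValuation (RatFunc K) (WithTop Γ)) (a : AlgebraicClosure K) (γ : Γ) : Prop :=
  ∃ W : AddValuation (RatFunc (AlgebraicClosure K)) (WithTop Γ),
    IsMonomialVal vbar W a γ ∧ Extends (liftRF K) ω W

/-- `(a,γ)` is a minimal pair of definition for `ω`. -/
def IsMinimalPairOfDef (vbar : AddValuation (AlgebraicClosure K) (WithTop Γ))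
    (ω : AddValuation (RatFunc K) (WithTop Γ)) (a : AlgebraicClosure K) (γ : Γ) : Prop :=
  IsPairOfDef vbar ω a γ ∧
    ∀ b : AlgebraicClosure K, (γ : WithTop Γ) ≤ vbar (a - b) → degOver K a ≤ degOver K b

/-- `(a,γ)` is a pair of definition for the valuation `W` on `K̄(x)`, i.e. `W = ν̄_{a,γ}`,
and it is minimal: `a` has least degree over `K` among all `b` with `ν̄(a-b) ≥ γ`. -/
def IsMinimalPairFor (vbar : AddValuation (AlgebraicClosure K) (WithTop Γ))
    (W : AddValuation (RatFunc (AlgebraicClosure K)) (WithTop Γ))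
    (a : AlgebraicClosure K) (γ : Γ) : Prop :=
  IsMonomialVal vbar W a γ ∧
    ∀ b : AlgebraicClosure K, (γ : WithTop Γ) ≤ vbar (a - b) → degOver K a ≤ degOver K b

/-- The valued field extension `(F|B, w)` (along `φ`) is value transcendental:
the quotient of value groups `wF / w(B)` has rational rank one, i.e. there is a value
which is not torsion modulo the value group of the base, and any two values are
`ℚ`-linearly dependent modulo the value group of the base.  (For the extensions of
valuations from `K` to `K(x)` considered in the paper, the second condition is
automatic, by the Abhyankar inequality.) -/
def IsValueTranscendental {B F : Type} [Field B] [Field F] (φ : B →+* F)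
    (w : AddValuation F (WithTop Γ)) : Prop :=
  (∃ (f : F) (γf : Γ), f ≠ 0 ∧ w f = (γf : WithTop Γ) ∧
      ∀ n : ℤ, n ≠ 0 → ∀ c : B, c ≠ 0 → ((n • γf : Γ) : WithTop Γ) ≠ w (φ c)) ∧
  (∀ (f g : F) (γf γg : Γ), f ≠ 0 → g ≠ 0 → w f = (γf : WithTop Γ) → w g = (γg : WithTop Γ) →
      ∃ m n : ℤ, ¬(m = 0 ∧ n = 0) ∧
        ∃ c : B, c ≠ 0 ∧ ((m • γf + n • γg : Γ) : WithTop Γ) = w (φ c))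

/-- The residue of `u` (an element of the valuation ring of `(F,w)`) is transcendental
over the residue field of the subset `S ⊆ F`:  whenever a polynomial expression
`Σᵢ cᵢ uⁱ` with coefficients `cᵢ ∈ S` of value `≥ 0` has value `> 0`, all the
coefficients have value `> 0` (i.e. residue `0`). -/
def ResidueTransOver {F : Type} [Field F] (w : AddValuation F (WithTop Γ))
    (S : Set F) (u : F) : Prop :=
  ∀ (n : ℕ) (c : ℕ → F), (∀ i ∈ Finset.range (n + 1), c i ∈ S ∧ 0 ≤ w (c i)) →
    0 < w (∑ i ∈ Finset.range (n + 1), c i * u ^ i) →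
    ∀ i ∈ Finset.range (n + 1), 0 < w (c i)

/-- The valued field extension `(F|B, w)` (along `φ`) is residue transcendental:
the residue field extension has transcendence degree one, i.e. some residue is
transcendental over the residue field of the base.  (For the extensions of valuations
from `K` to `K(x)` considered in the paper, transcendence degree `≤ 1` is automatic,
by the Abhyankar inequality.) -/
def IsResidueTranscendental {B F : Type} [Field B] [Field F] (φ : B →+* F)
    (w : AddValuation F (WithTop Γ)) : Prop :=
  ∃ f : F, w f = 0 ∧ ResidueTransOver w (Set.range φ) f

/-- The extension is valuation transcendental: value transcendental or residue
transcendental. -/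
def IsValuationTranscendental {B F : Type} [Field B] [Field F] (φ : B →+* F)
    (w : AddValuation F (WithTop Γ)) : Prop :=
  IsValueTranscendental φ w ∨ IsResidueTranscendental φ w

/-- The value group of the subset `S ⊆ F` under `w`, as a subgroup of `Γ`:
the subgroup { w f | f ∈ S, f ≠ 0 }.  (For `S` a subfield this set is already a
subgroup, so taking the generated subgroup is harmless.) -/
def valueSubgroup {F : Type} [Field F] (w : AddValuation F (WithTop Γ)) (S : Set F) :
    AddSubgroup Γ :=
  AddSubgroup.closure {γ : Γ | ∃ f ∈ S, f ≠ 0 ∧ w f = (γ : WithTop Γ)}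

/-- The subsets `S₁, S₂` of the valued field `(F,w)` have the same residues, i.e. they
induce the same residue field inside the residue field of `(F,w)`. -/
def SameResidues {F : Type} [Field F] (w : AddValuation F (WithTop Γ))
    (S₁ S₂ : Set F) : Prop :=
  (∀ f ∈ S₁, 0 ≤ w f → ∃ g ∈ S₂, 0 ≤ w g ∧ 0 < w (f - g)) ∧
  (∀ g ∈ S₂, 0 ≤ w g → ∃ f ∈ S₁, 0 ≤ w f ∧ 0 < w (g - f))

/-- The residue field of `S₂` has degree `j` over the residue field of `S₁` (both viewed
inside the residue field of `(F,w)`): there are `j` elements of `S₂`, integral for `w`,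
whose residues form a basis of the residue field of `S₂` over that of `S₁`. -/
def ResidueDegreeIs {F : Type} [Field F] (w : AddValuation F (WithTop Γ))
    (S₁ S₂ : Set F) (j : ℕ) : Prop :=
  ∃ g : Fin j → F,
    (∀ i, g i ∈ S₂ ∧ 0 ≤ w (g i)) ∧
    (∀ h ∈ S₂, 0 ≤ w h →
      ∃ c : Fin j → F, (∀ i, c i ∈ S₁ ∧ 0 ≤ w (c i)) ∧ 0 < w (h - ∑ i, c i * g i)) ∧
    (∀ c : Fin j → F, (∀ i, c i ∈ S₁ ∧ 0 ≤ w (c i)) →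
      0 < w (∑ i, c i * g i) → ∀ i, 0 < w (c i))

/-- `κ` is the Krasner constant `kras(a,K) = max { ν̄(σa - τa) : σ, τ ∈ Gal(K̄|K), σa ≠ τa }`. -/
def IsKrasnerConstant (vbar : AddValuation (AlgebraicClosure K) (WithTop Γ))
    (a : AlgebraicClosure K) (κ : WithTop Γ) : Prop :=
  (∃ σ τ : AlgebraicClosure K ≃ₐ[K] AlgebraicClosure K, σ a ≠ τ a ∧ vbar (σ a - τ a) = κ) ∧
  (∀ σ τ : AlgebraicClosure K ≃ₐ[K] AlgebraicClosure K, σ a ≠ τ a → vbar (σ a - τ a) ≤ κ)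

/-- `y` is separable algebraic over the subfield `E` of `F`: it is the root of a nonzero
separable polynomial with coefficients in `E`. -/
def SepAlgOver {F : Type} [Field F] (E : Subfield F) (y : F) : Prop :=
  ∃ p : Polynomial F, p ≠ 0 ∧ (∀ i, p.coeff i ∈ E) ∧ p.Separable ∧ p.eval y = 0

/-- `y` is algebraic over the subfield `E` of `F`. -/
def AlgOver {F : Type} [Field F] (E : Subfield F) (y : F) : Prop :=
  ∃ p : Polynomial F, p ≠ 0 ∧ (∀ i, p.coeff i ∈ E) ∧ p.eval y = 0

/-- The henselization `E^h` of the subfield `E` of the algebraically closed valued field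
`(F,Ω)`, realized inside `F` as the decomposition field: the set of elements of `F`
separable algebraic over `E` and fixed by every automorphism of `F` over `E` which
preserves the valuation `Ω`. -/
def henselizationSet {F : Type} [Field F] (Ω : AddValuation F (WithTop Γ))
    (E : Subfield F) : Set F :=
  {y | SepAlgOver E y ∧
    ∀ σ : F ≃+* F, (∀ e ∈ E, σ e = e) → (∀ z, Ω (σ z) = Ω z) → σ y = y}

/-- A fixed algebraic closure of `K̄(x)`; it is also an algebraic closure of `K(x)`. -/
abbrev Lhat (K : Type) [Field K] : Type := AlgebraicClosure (RatFunc (AlgebraicClosure K))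

/-- The canonical embedding `K̄ → Lhat K`. -/
def toL (K : Type) [Field K] : AlgebraicClosure K →+* Lhat K :=
  (algebraMap (RatFunc (AlgebraicClosure K)) (Lhat K)).comp
    (algebraMap (AlgebraicClosure K) (RatFunc (AlgebraicClosure K)))

/-- The canonical embedding `K(x) → Lhat K`. -/
def kxToL (K : Type) [Field K] : RatFunc K →+* Lhat K :=
  (algebraMap (RatFunc (AlgebraicClosure K)) (Lhat K)).comp (liftRF K)

/-- The subfield `K(x)` of `Lhat K`. -/
def KxSub (K : Type) [Field K] : Subfield (Lhat K) := (kxToL K).fieldRange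

/-- The subfield `K` of `Lhat K`. -/
def KSub (K : Type) [Field K] : Subfield (Lhat K) :=
  ((toL K).comp (algebraMap K (AlgebraicClosure K))).fieldRange

/-- The subfield `K(a)` of `Lhat K`, for `a ∈ K̄`. -/
def KadjSub (K : Type) [Field K] (a : AlgebraicClosure K) : Subfield (Lhat K) :=
  Subfield.closure ((KSub K : Set (Lhat K)) ∪ {toL K a})

/-- The subfield `K(a,x)` of `Lhat K`, for `a ∈ K̄`. -/
def KaxSub (K : Type) [Field K] (a : AlgebraicClosure K) : Subfield (Lhat K) :=
  Subfield.closure ((KxSub K : Set (Lhat K)) ∪ {toL K a})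

/-- The implicit constant field `IC(K(x)|K,ω) = K̄ ∩ K(x)^h`, computed inside the fixed
algebraic closure `Lhat K` of `K(x)` with respect to the valuation `Ω` on it. -/
def ICset (K : Type) [Field K] {Γ : Type} [AddCommGroup Γ] [LinearOrder Γ] [IsOrderedAddMonoid Γ]
    (Ω : AddValuation (Lhat K) (WithTop Γ)) : Set (Lhat K) :=
  Set.range (toL K) ∩ henselizationSet Ω (KxSub K)

/-- `σ` belongs to the absolute inertia group of `(K,ν̄)`:
`ν̄(σc - c) > 0` for every `c` in the valuation ring of `K^sep`. -/
def InInertiaGroup (vbar : AddValuation (AlgebraicClosure K) (WithTop Γ))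
    (σ : AlgebraicClosure K ≃ₐ[K] AlgebraicClosure K) : Prop :=
  ∀ c : AlgebraicClosure K, (minpoly K c).Separable → 0 ≤ vbar c → 0 < vbar (σ c - c)

/-- `σ` belongs to the absolute ramification group of `(K,ν̄)`:
`ν̄(σc - c) > ν̄ c` for every `c ∈ K^sep`, `c ≠ 0`. -/
def InRamificationGroup (vbar : AddValuation (AlgebraicClosure K) (WithTop Γ))
    (σ : AlgebraicClosure K ≃ₐ[K] AlgebraicClosure K) : Prop :=
  ∀ c : AlgebraicClosure K, c ≠ 0 → (minpoly K c).Separable → vbar c < vbar (σ c - c)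

/-- The absolute inertia field `K^i` of `(K,ν̄)`, as a subset of `K̄`: the fixed field in
`K^sep` of the absolute inertia group. -/
def inertiaFieldSet (vbar : AddValuation (AlgebraicClosure K) (WithTop Γ)) :
    Set (AlgebraicClosure K) :=
  {c | (minpoly K c).Separable ∧
    ∀ σ : AlgebraicClosure K ≃ₐ[K] AlgebraicClosure K, InInertiaGroup vbar σ → σ c = c}

/-- The absolute ramification field `K^r` of `(K,ν̄)`, as a subset of `K̄`: the fixed field
in `K^sep` of the absolute ramification group. -/
def ramificationFieldSet (vbar : AddValuation (AlgebraicClosure K) (WithTop Γ)) :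
    Set (AlgebraicClosure K) :=
  {c | (minpoly K c).Separable ∧
    ∀ σ : AlgebraicClosure K ≃ₐ[K] AlgebraicClosure K, InRamificationGroup vbar σ → σ c = c}

/-- `(K,ν)` is henselian, i.e. `ν` extends uniquely to `K̄`; equivalently (all extensions
of `ν` to `K̄` being conjugate), the fixed extension `ν̄` is invariant under `Gal(K̄|K)`. -/
def IsHenselianBase (vbar : AddValuation (AlgebraicClosure K) (WithTop Γ)) : Prop :=
  ∀ σ : AlgebraicClosure K ≃ₐ[K] AlgebraicClosure K, ∀ c, vbar (σ c) = vbar c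

/-- `ν` admits a unique extension from `K` to `K(a)`; equivalently, all the conjugate
extensions agree on `K(a)`. -/
def UniqueExtensionOn (vbar : AddValuation (AlgebraicClosure K) (WithTop Γ))
    (a : AlgebraicClosure K) : Prop :=
  ∀ σ : AlgebraicClosure K ≃ₐ[K] AlgebraicClosure K,
    ∀ b ∈ IntermediateField.adjoin K {a}, vbar (σ b) = vbar b

/-- `succ` is a successor function for the linear order `ι`. -/
def IsSuccFn {ι : Type} [LinearOrder ι] (succ : ι → ι) : Prop :=
  ∀ μ, μ < succ μ ∧ ∀ ρ, μ < ρ → succ μ ≤ ρ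

/-- `z` is a pseudo-Cauchy sequence in `(F,v)`. -/
def IsPseudoCauchy {F ι : Type} [Field F] [LinearOrder ι]
    (v : AddValuation F (WithTop Γ)) (z : ι → F) : Prop :=
  ∀ ⦃μ₁ μ₂ μ₃ : ι⦄, μ₁ < μ₂ → μ₂ < μ₃ → v (z μ₁ - z μ₂) < v (z μ₂ - z μ₃)

/-- `y` (in the valued extension `(F,w)` of `(B,v)` along `φ`) is a limit of the
pseudo-Cauchy sequence `z` in `(B,v)`:  `w(y - z_μ) = v(z_μ - z_{μ+1})` for all `μ`. -/
def IsPCLimit {B F ι : Type} [Field B] [Field F] [LinearOrder ι]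
    (succ : ι → ι) (φ : B →+* F)
    (v : AddValuation B (WithTop Γ)) (w : AddValuation F (WithTop Γ))
    (z : ι → B) (y : F) : Prop :=
  ∀ μ : ι, w (y - φ (z μ)) = v (z μ - z (succ μ))

/-- The sequence `s` is ultimately constant. -/
def UltimatelyConstant {ι α : Type} [LinearOrder ι] (s : ι → α) : Prop :=
  ∃ μ₀, ∀ μ, μ₀ ≤ μ → s μ = s μ₀

/-- The sequence `s` is ultimately (strictly) monotonically increasing. -/
def UltimatelyStrictMono {ι α : Type} [LinearOrder ι] [Preorder α] (s : ι → α) : Prop :=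
  ∃ μ₀, ∀ μ₁ μ₂, μ₀ ≤ μ₁ → μ₁ < μ₂ → s μ₁ < s μ₂

/-- The pseudo-Cauchy sequence `z` in `(B,v)` is of transcendental type. -/
def IsTranscendentalType {B ι : Type} [Field B] [LinearOrder ι]
    (v : AddValuation B (WithTop Γ)) (z : ι → B) : Prop :=
  ∀ f : Polynomial B, UltimatelyConstant (fun μ => v (f.eval (z μ)))

/-- `m` is an associated minimal polynomial of the pseudo-Cauchy sequence `z` of
algebraic type: a monic polynomial of minimal degree such that `(v m(z_μ))_μ` is
ultimately monotonically increasing. -/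
def IsAssocMinPoly {B ι : Type} [Field B] [LinearOrder ι]
    (v : AddValuation B (WithTop Γ)) (z : ι → B) (m : Polynomial B) : Prop :=
  m.Monic ∧ UltimatelyStrictMono (fun μ => v (m.eval (z μ))) ∧
    ∀ g : Polynomial B, g.Monic → UltimatelyStrictMono (fun μ => v (g.eval (z μ))) →
      m.natDegree ≤ g.natDegree

/-- `d = δ(f) = max { ω̄(x - c) : c ∈ K̄, f(c) = 0 }`, computed with respect to the
extension `W = ω̄` of `ω` to `K̄(x)`. -/
def IsDeltaOf (W : AddValuation (RatFunc (AlgebraicClosure K)) (WithTop Γ))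
    (f : Polynomial K) (d : WithTop Γ) : Prop :=
  (∃ c : AlgebraicClosure K, Polynomial.aeval c f = 0 ∧
      W (RatFunc.X - algebraMap (AlgebraicClosure K) (RatFunc (AlgebraicClosure K)) c) = d) ∧
  ∀ c : AlgebraicClosure K, Polynomial.aeval c f = 0 →
      W (RatFunc.X - algebraMap (AlgebraicClosure K) (RatFunc (AlgebraicClosure K)) c) ≤ d

/-- `Q` is a key polynomial for `ω` over `K` (with respect to the extension `W = ω̄`,
on which `δ` does not depend): `Q` is monic and `deg f < deg Q → δ(f) < δ(Q)`. -/
def IsKeyPolynomial (W : AddValuation (RatFunc (AlgebraicClosure K)) (WithTop Γ))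
    (Q : Polynomial K) : Prop :=
  Q.Monic ∧ ∀ f : Polynomial K, f.natDegree < Q.natDegree →
    ∀ df dQ : WithTop Γ, IsDeltaOf W f df → IsDeltaOf W Q dQ → df < dQ

/-- `(a,z)` is a distinguished pair over the henselian field `(K,ν̄)`:
`[K(z):K] < [K(a):K]`, `ν̄(a-z) = δ(a,K) = max M(a)`, and `[K(z):K]` is minimal
with these properties. -/
def IsDistinguishedPair (vbar : AddValuation (AlgebraicClosure K) (WithTop Γ))
    (a z : AlgebraicClosure K) : Prop :=
  degOver K z < degOver K a ∧
  (∀ z' : AlgebraicClosure K, degOver K z' < degOver K a → vbar (a - z') ≤ vbar (a - z)) ∧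
  (∀ z' : AlgebraicClosure K, degOver K z' < degOver K a → vbar (a - z') = vbar (a - z) →
      degOver K z ≤ degOver K z')

/-- The extension `(E(x)|E, W)` inside the valued field `(F,W)` is pure, where `x ∈ F`:
(PE1) some `W(x-c)`, `c ∈ E`, is non-torsion modulo the value group of `E`, or
(PE2) some `b(x-c)`, `b,c ∈ E`, has value `0` and residue transcendental over the
residue field of `E`, or (PE3) `x` is the limit of a pseudo-Cauchy sequence of
transcendental type in `(E,W)`. -/
def IsPureExt {F : Type} [Field F] (W : AddValuation F (WithTop Γ))
    (E : Subfield F) (x : F) : Prop :=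
  (∃ c ∈ E, ∃ γ : Γ, W (x - c) = (γ : WithTop Γ) ∧
      ∀ n : ℤ, n ≠ 0 → ∀ b ∈ E, b ≠ 0 → ((n • γ : Γ) : WithTop Γ) ≠ W b) ∨
  (∃ b ∈ E, ∃ c ∈ E, W (b * (x - c)) = 0 ∧ ResidueTransOver W (E : Set F) (b * (x - c))) ∨
  (∃ (ι : Type) (_ : LinearOrder ι) (succ : ι → ι), Nonempty ι ∧ IsSuccFn succ ∧
      ∃ z : ι → F, (∀ μ, z μ ∈ E) ∧ IsPseudoCauchy W z ∧
        (∀ p : Polynomial F, (∀ i, p.coeff i ∈ E) →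
          UltimatelyConstant fun μ => W (p.eval (z μ))) ∧
        IsPCLimit succ (RingHom.id F) W W z x)

/-- The extension `(E(x)|E, W)` is weakly pure: it is pure, or some `b(x-c)^e` with
`b,c ∈ E`, `e ∈ ℕ`, has value `0` and residue transcendental over the residue field
of `E`. -/
def IsWeaklyPureExt {F : Type} [Field F] (W : AddValuation F (WithTop Γ))
    (E : Subfield F) (x : F) : Prop :=
  IsPureExt W E x ∨
    ∃ b ∈ E, ∃ c ∈ E, ∃ e : ℕ, W (b * (x - c) ^ e) = 0 ∧
      ResidueTransOver W (E : Set F) (b * (x - c) ^ e)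

end VT

/-!
Write `ω̄ = ν̄_{a,γ}`. Factoring a polynomial `p` over `K̄` into linear factors gives
`ω̄ p = ν̄ (lc p) + Σ_b min (ν̄ (a - b), γ)` over the roots `b` of `p`, so every value of `ω̄` lies
in `ν̄K̄ + ℕγ`, with a positive coefficient of `γ` when `a` is a root of `p`. Since `ν̄K̄ / νK` is
torsion, value transcendence of `ω` forces `γ` to be non-torsion modulo `ν̄K̄`; hence no positive
multiple of `ωQ` lies in `ν̄K̄`, which is (1). If `deg g < deg Q`, minimality of `(a,γ)` forces
`ν̄ (a - b) < γ` for every root `b` of `g`, so `ωg = ν̄ g(a)`, which is (2). In (3) the values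
`ν̄ fᵢ(a) + i ωQ` of the nonzero terms are therefore pairwise distinct, and the value of the sum is
their minimum.
-/

namespace AddValuation

variable {R Γ₀ : Type*}

section Monoid

variable [LinearOrderedAddCommMonoidWithTop Γ₀]

theorem map_multiset_prod [CommRing R] (v : AddValuation R Γ₀) (s : Multiset R) :
    v s.prod = (s.map v).sum := by
  induction s using Multiset.induction_on with
  | empty => simp
  | cons x s ih => simp [ih]

theorem map_sum_eq_inf [Ring R] (v : AddValuation R Γ₀) {ι : Type*} [DecidableEq ι]
    (s : Finset ι) (f : ι → R)
    (hf : ∀ i ∈ s, ∀ j ∈ s, i ≠ j → v (f i) = v (f j) → v (f i) = ⊤) :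
    v (∑ i ∈ s, f i) = s.inf fun i => v (f i) := by
  induction s using Finset.induction_on with
  | empty => simp
  | insert a s ha ih =>
    have ih := ih fun i hi j hj =>
      hf i (Finset.mem_insert_of_mem hi) j (Finset.mem_insert_of_mem hj)
    rw [Finset.sum_insert ha, Finset.inf_insert, ← ih]
    by_cases hval : v (f a) = v (∑ i ∈ s, f i)
    · have htop : v (f a) = ⊤ := by
        rcases s.eq_empty_or_nonempty with rfl | hs
        · simpa using hval
        obtain ⟨j, hj, hinf⟩ := s.exists_mem_eq_inf hs fun i => v (f i)
        exact hf a (Finset.mem_insert_self a s) j (Finset.mem_insert_of_mem hj)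
          (ne_of_mem_of_not_mem hj ha).symm (hval.trans (ih.trans hinf))
      rw [← hval, htop, min_self]
      exact top_le_iff.mp (v.map_le_add htop.ge (hval ▸ htop).ge)
    · exact v.map_add_of_distinct_val hval

end Monoid

section Group

variable [LinearOrderedAddCommGroupWithTop Γ₀] {F : Type*} [Field F] (v : AddValuation F Γ₀)

theorem map_div_eq_of_eq_add {x y : F} {g : Γ₀} (hx : x ≠ 0) (h : v y = v x + g) :
    v (y / x) = g := by
  rw [map_div, h, add_comm, sub_eq_add_neg,
    LinearOrderedAddCommGroupWithTop.add_neg_cancel_right_of_ne_top (v.ne_top_iff.mpr hx)]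

theorem exists_nsmul_eq_map_algebraMap {K : Type*} [Field K] [Algebra K F] {u : F}
    (hu : IsIntegral K u) (hu0 : u ≠ 0) :
    ∃ n : ℕ, 0 < n ∧ ∃ d : K, d ≠ 0 ∧ n • v u = v (algebraMap K F d) := by
  classical
  set p := minpoly K u
  set t : ℕ → F := fun i => algebraMap K F (p.coeff i) * u ^ i
  have hsum : ∑ i ∈ Finset.range (p.natDegree + 1), t i = 0 := by
    simpa [Polynomial.aeval_eq_sum_range, Algebra.smul_def] using minpoly.aeval K u
  -- The terms of `p(u) = 0` cannot all have distinct values, as the leading one is finite.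
  obtain ⟨i, -, j, -, hij, heq, hfin⟩ : ∃ i ∈ Finset.range (p.natDegree + 1),
      ∃ j ∈ Finset.range (p.natDegree + 1), i < j ∧ v (t i) = v (t j) ∧ v (t i) ≠ ⊤ := by
    by_contra! hdistinct
    have hinf := v.map_sum_eq_inf _ t fun i hi j hj hne hval => by
      rcases hne.lt_or_gt with hlt | hlt
      · exact hdistinct i hi j hj hlt hval
      · exact hval ▸ hdistinct j hj i hi hlt hval.symm
    rw [hsum, map_zero, eq_comm, Finset.inf_eq_top_iff] at hinf
    have hlead : t p.natDegree = u ^ p.natDegree := by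
      simp only [t, p, (minpoly.monic hu).coeff_natDegree, _root_.map_one, one_mul]
    exact v.ne_top_iff.mpr (pow_ne_zero _ hu0) (hlead ▸ hinf _ (Finset.self_mem_range_succ _))
  have hcoeff : ∀ k, v (t k) ≠ ⊤ → p.coeff k ≠ 0 := fun k hk h => hk (by simp [t, h])
  have hcj := hcoeff j (heq ▸ hfin)
  -- Dividing the two equal-valued terms by `cⱼ uⁱ` gives `v (u ^ (j - i)) = v (cᵢ / cⱼ)`.
  have htj : u ^ (j - i) * (algebraMap K F (p.coeff j) * u ^ i) = t j := by
    rw [mul_left_comm, ← pow_add, Nat.sub_add_cancel hij.le]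
  have hti :
      algebraMap K F (p.coeff i / p.coeff j) * (algebraMap K F (p.coeff j) * u ^ i) = t i := by
    rw [← mul_assoc, ← _root_.map_mul, div_mul_cancel₀ _ hcj]
  refine ⟨j - i, by omega, p.coeff i / p.coeff j, div_ne_zero (hcoeff i hfin) hcj, ?_⟩
  have hX : algebraMap K F (p.coeff j) * u ^ i ≠ 0 := by simp [hcj, hu0]
  rw [← AddValuation.map_pow]
  refine (add_left_inj_of_ne_top (v.ne_top_iff.mpr hX)).mp ?_
  rw [← AddValuation.map_mul, ← AddValuation.map_mul, htj, hti, heq]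

end Group

end AddValuation

namespace VT

variable {K : Type} [Field K] {Γ : Type} [AddCommGroup Γ] [LinearOrder Γ] [IsOrderedAddMonoid Γ]
  {vbar : AddValuation (AlgebraicClosure K) (WithTop Γ)} {ω : AddValuation (RatFunc K) (WithTop Γ)}
  {W : AddValuation (RatFunc (AlgebraicClosure K)) (WithTop Γ)} {a : AlgebraicClosure K} {γ : Γ}

theorem liftRF_algebraMap (p : K[X]) :
    liftRF K (algebraMap K[X] (RatFunc K) p) =
      algebraMap _ (RatFunc (AlgebraicClosure K)) (p.map (algebraMap K (AlgebraicClosure K))) := by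
  rw [← div_one (algebraMap K[X] (RatFunc K) p), ← map_one (algebraMap K[X] (RatFunc K)), liftRF,
    RatFunc.coe_mapRingHom_eq_coe_map, RatFunc.map_apply_div]
  simp

namespace Extends

theorem map_algebraMap_polynomial (hWω : Extends (liftRF K) ω W) (p : K[X]) :
    ω (algebraMap K[X] (RatFunc K) p) =
      W (algebraMap _ _ (p.map (algebraMap K (AlgebraicClosure K)))) := by
  rw [← hWω, liftRF_algebraMap]

end Extends

namespace IsMonomialVal

variable (hW : IsMonomialVal vbar W a γ)
include hW

theorem map_C (c : AlgebraicClosure K) : W (algebraMap _ _ (C c)) = vbar c := by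
  rw [hW]
  simp [taylor_C]

theorem map_X_sub_C (b : AlgebraicClosure K) :
    W (algebraMap _ _ (X - C b)) = min (vbar (a - b)) γ := by
  have htaylor : taylor a (X - C b) = X + C (a - b) := by
    rw [map_sub, taylor_X, taylor_C, map_sub]
    ring
  rw [hW, natDegree_X_sub_C, htaylor, show Finset.range (1 + 1) = {0, 1} from rfl,
    Finset.inf_insert, Finset.inf_singleton]
  simp [coeff_C]

theorem map_polynomial (p : (AlgebraicClosure K)[X]) :
    W (algebraMap _ _ p) =
      vbar p.leadingCoeff + (p.roots.map fun b => min (vbar (a - b)) γ).sum := by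
  conv_lhs => rw [(IsAlgClosed.splits p).eq_prod_roots]
  rw [map_mul, AddValuation.map_mul, hW.map_C, map_multiset_prod, AddValuation.map_multiset_prod,
    Multiset.map_map, Multiset.map_map]
  congr 2
  exact Multiset.map_congr rfl fun b _ => hW.map_X_sub_C b

theorem map_eq_of_forall_root_lt {p : (AlgebraicClosure K)[X]}
    (hp : ∀ b ∈ p.roots, vbar (a - b) < γ) : W (algebraMap _ _ p) = vbar (p.eval a) := by
  conv_rhs => rw [(IsAlgClosed.splits p).eq_prod_roots]
  rw [hW.map_polynomial, eval_mul, eval_C, eval_multiset_prod, AddValuation.map_mul,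
    AddValuation.map_multiset_prod, Multiset.map_map, Multiset.map_map]
  congr 2
  exact Multiset.map_congr rfl fun b hb => by simp [min_eq_left (hp b hb).le]

theorem exists_map_eq_add_nsmul {p : (AlgebraicClosure K)[X]} (hp : p ≠ 0) :
    ∃ (e : AlgebraicClosure K) (k : ℕ), e ≠ 0 ∧ (p.IsRoot a → 0 < k) ∧
      W (algebraMap _ _ p) = vbar e + k • (γ : WithTop Γ) := by
  classical
  set near := p.roots.filter fun b => (γ : WithTop Γ) ≤ vbar (a - b)
  set far := p.roots.filter fun b => ¬(γ : WithTop Γ) ≤ vbar (a - b)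
  have hfar0 : (far.map fun b => a - b).prod ≠ 0 :=
    Multiset.prod_ne_zero fun h0 => by
      obtain ⟨b, hb, hab⟩ := Multiset.mem_map.mp h0
      exact (Multiset.mem_filter.mp hb).2 (by simp [hab])
  refine ⟨p.leadingCoeff * (far.map fun b => a - b).prod, Multiset.card near,
    mul_ne_zero (leadingCoeff_ne_zero.mpr hp) hfar0, fun ha => ?_, ?_⟩
  · exact Multiset.card_pos_iff_exists_mem.mpr ⟨a, Multiset.mem_filter.mpr
      ⟨(mem_roots hp).mpr ha, by simp⟩⟩
  · have hnear : (near.map fun b => min (vbar (a - b)) γ).sum =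
        Multiset.card near • (γ : WithTop Γ) := by
      rw [Multiset.map_congr rfl fun b hb => min_eq_right (Multiset.mem_filter.mp hb).2,
        Multiset.map_const', Multiset.sum_replicate]
    have hfar : (far.map fun b => min (vbar (a - b)) γ).sum =
        vbar (far.map fun b => a - b).prod := by
      rw [AddValuation.map_multiset_prod, Multiset.map_map]
      exact congrArg Multiset.sum (Multiset.map_congr rfl fun b hb =>
        min_eq_left (not_le.mp (Multiset.mem_filter.mp hb).2).le)
    have hsplit : near + far = p.roots := Multiset.filter_add_not _ _
    rw [hW.map_polynomial, ← hsplit, Multiset.map_add, Multiset.sum_add, hnear, hfar,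
      AddValuation.map_mul]
    ac_rfl

theorem exists_nsmul_map_eq {m : ℕ} {e : AlgebraicClosure K} (he : vbar e = m • (γ : WithTop Γ))
    {h : RatFunc (AlgebraicClosure K)} (hh : h ≠ 0) : ∃ u ≠ 0, m • W h = vbar u := by
  have he0 : e ≠ 0 := by
    rintro rfl
    simp [← WithTop.coe_nsmul] at he
  have hpoly : ∀ p : (AlgebraicClosure K)[X], p ≠ 0 →
      ∃ u ≠ 0, m • W (algebraMap _ _ p) = vbar u := by
    intro p hp
    obtain ⟨e', k, he', -, hWp⟩ := hW.exists_map_eq_add_nsmul hp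
    refine ⟨e' ^ m * e ^ k, mul_ne_zero (pow_ne_zero _ he') (pow_ne_zero _ he0), ?_⟩
    rw [hWp, AddValuation.map_mul, AddValuation.map_pow, AddValuation.map_pow, he, nsmul_add,
      smul_comm m k]
  obtain ⟨un, hun0, hun⟩ := hpoly h.num (RatFunc.num_ne_zero hh)
  obtain ⟨ud, hud0, hud⟩ := hpoly h.denom h.denom_ne_zero
  refine ⟨un / ud, div_ne_zero hun0 hud0, (vbar.map_div_eq_of_eq_add hud0 ?_).symm⟩
  have hnum : algebraMap _ _ h.num = h * algebraMap _ _ h.denom :=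
    (div_eq_iff (RatFunc.algebraMap_ne_zero h.denom_ne_zero)).mp h.num_div_denom
  rw [← hun, ← hud, ← nsmul_add, ← AddValuation.map_mul, hnum, mul_comm]

theorem map_algebraMap_of_extends (hWω : Extends (liftRF K) ω W) (d : K) :
    ω (algebraMap K (RatFunc K) d) = vbar (algebraMap K (AlgebraicClosure K) d) := by
  rw [IsScalarTower.algebraMap_apply K K[X] (RatFunc K), Polynomial.algebraMap_eq,
    hWω.map_algebraMap_polynomial, Polynomial.map_C, hW.map_C]

theorem map_ne_nsmul_of_isValueTranscendental (hWω : Extends (liftRF K) ω W)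
    (hvt : IsValueTranscendental (algebraMap K (RatFunc K)) ω) {m : ℕ} (hm : 0 < m)
    (e : AlgebraicClosure K) : vbar e ≠ m • (γ : WithTop Γ) := by
  intro he
  obtain ⟨f, γf, hf0, hωf, hfree⟩ := hvt.1
  obtain ⟨u, hu0, hu⟩ := hW.exists_nsmul_map_eq he ((map_ne_zero (liftRF K)).mpr hf0)
  obtain ⟨n, hn, d, hd0, hd⟩ :=
    vbar.exists_nsmul_eq_map_algebraMap (Algebra.IsIntegral.isIntegral (R := K) u) hu0
  refine hfree ((n * m : ℕ) : ℤ) (by positivity) d hd0 ?_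
  rw [natCast_zsmul, WithTop.coe_nsmul, ← hωf, mul_nsmul', ← hWω f, hu, hd,
    hW.map_algebraMap_of_extends hWω]

theorem nsmul_map_minpoly_ne (hWω : Extends (liftRF K) ω W)
    (hvt : IsValueTranscendental (algebraMap K (RatFunc K)) ω) {n : ℕ} (hn : 0 < n)
    (c : AlgebraicClosure K) : n • ω (algebraMap K[X] (RatFunc K) (minpoly K a)) ≠ vbar c := by
  have hQ : (minpoly K a).map (algebraMap K (AlgebraicClosure K)) ≠ 0 :=
    Polynomial.map_ne_zero (minpoly.ne_zero (Algebra.IsIntegral.isIntegral a))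
  obtain ⟨e, k, he0, hk, hWQ⟩ := hW.exists_map_eq_add_nsmul hQ
  have hroot : ((minpoly K a).map (algebraMap K (AlgebraicClosure K))).IsRoot a := by
    rw [IsRoot, eval_map_algebraMap, minpoly.aeval]
  rw [hWω.map_algebraMap_polynomial, hWQ, nsmul_add, ← AddValuation.map_pow, ← mul_nsmul']
  intro h
  exact hW.map_ne_nsmul_of_isValueTranscendental hWω hvt (Nat.mul_pos hn (hk hroot)) (c / e ^ n)
    (vbar.map_div_eq_of_eq_add (pow_ne_zero _ he0) h.symm)

theorem add_nsmul_map_minpoly_ne (hWω : Extends (liftRF K) ω W)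
    (hvt : IsValueTranscendental (algebraMap K (RatFunc K)) ω) {α β : AlgebraicClosure K}
    (hα : α ≠ 0) {i j : ℕ} (hij : i < j) :
    vbar α + i • ω (algebraMap K[X] (RatFunc K) (minpoly K a)) ≠
      vbar β + j • ω (algebraMap K[X] (RatFunc K) (minpoly K a)) := by
  intro h
  have hQi : i • ω (algebraMap K[X] (RatFunc K) (minpoly K a)) ≠ ⊤ := by
    rw [← AddValuation.map_pow, ω.ne_top_iff, ← map_pow]
    exact RatFunc.algebraMap_ne_zero
      (pow_ne_zero _ (minpoly.ne_zero (Algebra.IsIntegral.isIntegral a)))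
  rw [← Nat.sub_add_cancel hij.le, add_nsmul, ← add_assoc, add_left_inj_of_ne_top hQi] at h
  by_cases hβ : β = 0
  · simp [hβ, hα] at h
  exact hW.nsmul_map_minpoly_ne hWω hvt (Nat.sub_pos_of_lt hij) _
    (vbar.map_div_eq_of_eq_add hβ h).symm

end IsMonomialVal

namespace IsMinimalPairFor

variable (hW : IsMinimalPairFor vbar W a γ) (hWω : Extends (liftRF K) ω W)
include hW hWω

theorem map_eq_aeval_of_degree_lt {g : K[X]} (hg : g.degree < (minpoly K a).degree) :
    ω (algebraMap K[X] (RatFunc K) g) = vbar (aeval a g) := by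
  rw [hWω.map_algebraMap_polynomial, hW.1.map_eq_of_forall_root_lt, eval_map_algebraMap]
  intro b hb
  by_contra! hγ
  obtain ⟨hg0, hgb⟩ := mem_aroots.mp hb
  have hmin : degOver K a ≤ degOver K b := hW.2 b hγ
  have hdvd := natDegree_le_of_dvd (minpoly.dvd K b hgb) hg0
  have hlt := natDegree_lt_natDegree hg0 hg
  simp only [degOver] at hmin
  omega

theorem map_sum_mul_minpoly_pow (hvt : IsValueTranscendental (algebraMap K (RatFunc K)) ω)
    (s : Finset ℕ) (fs : ℕ → K[X]) (hdeg : ∀ i ∈ s, (fs i).degree < (minpoly K a).degree) :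
    ω (algebraMap K[X] (RatFunc K) (∑ i ∈ s, fs i * minpoly K a ^ i)) =
      s.inf fun i => vbar (aeval a (fs i)) + i • ω (algebraMap K[X] (RatFunc K) (minpoly K a)) := by
  have hterm : ∀ i ∈ s, ω (algebraMap K[X] (RatFunc K) (fs i * minpoly K a ^ i)) =
      vbar (aeval a (fs i)) + i • ω (algebraMap K[X] (RatFunc K) (minpoly K a)) := fun i hi => by
    rw [map_mul, map_pow, AddValuation.map_mul, AddValuation.map_pow,
      hW.map_eq_aeval_of_degree_lt hWω (hdeg i hi)]
  rw [map_sum, ω.map_sum_eq_inf, Finset.inf_congr rfl hterm]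
  intro i hi j hj hij hval
  rw [hterm i hi, hterm j hj] at hval
  rw [hterm i hi]
  by_contra hfin
  have hαi : aeval a (fs i) ≠ 0 := fun h0 => hfin (by simp [h0])
  have hαj : aeval a (fs j) ≠ 0 := fun h0 => hfin (by simp [hval, h0])
  rcases hij.lt_or_gt with hlt | hlt
  · exact hW.1.add_nsmul_map_minpoly_ne hWω hvt hαi hlt hval
  · exact hW.1.add_nsmul_map_minpoly_ne hWω hvt hαj hlt hval.symm

end IsMinimalPairFor

/-- Lemma: description of a value transcendental extension by a
minimal pair.  Let `ω` be a value transcendental extension of `ν` to `K(x)` with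
minimal pair of definition `(a,γ)` (realized by `W = ω̄ = ν̄_{a,γ}`), and let
`Q = minpoly K a`.  Then (1) `ωQ ∉ ν̄K̄`; (2) for every `g ∈ K[x]` with
`deg g < deg Q`, `ωg = ν̄ g(a)`; (3) for every `Q`-expansion `f = Σᵢ fᵢ Qⁱ`
(`deg fᵢ < deg Q`), `ωf = minᵢ (ν̄ fᵢ(a) + i·ωQ)`. -/
theorem statement_6 {K : Type} [Field K] {Γ : Type} [AddCommGroup Γ] [LinearOrder Γ] [IsOrderedAddMonoid Γ]
    (vbar : AddValuation (AlgebraicClosure K) (WithTop Γ))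
    (ω : AddValuation (RatFunc K) (WithTop Γ))
    (hvt : IsValueTranscendental (algebraMap K (RatFunc K)) ω)
    (a : AlgebraicClosure K) (γ : Γ)
    (W : AddValuation (RatFunc (AlgebraicClosure K)) (WithTop Γ))
    (hW : IsMinimalPairFor vbar W a γ)
    (hWω : Extends (liftRF K) ω W) :
    (∀ c : AlgebraicClosure K, c ≠ 0 →
      ω (algebraMap (Polynomial K) (RatFunc K) (minpoly K a)) ≠ vbar c) ∧
    (∀ g : Polynomial K, g.degree < (minpoly K a).degree →
      ω (algebraMap (Polynomial K) (RatFunc K) g) = vbar (Polynomial.aeval a g)) ∧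
    (∀ (r : ℕ) (fs : ℕ → Polynomial K),
      (∀ i ∈ Finset.range (r + 1), (fs i).degree < (minpoly K a).degree) →
      ω (algebraMap (Polynomial K) (RatFunc K)
          (∑ i ∈ Finset.range (r + 1), fs i * (minpoly K a) ^ i)) =
        (Finset.range (r + 1)).inf (fun i =>
          vbar (Polynomial.aeval a (fs i)) +
            i • ω (algebraMap (Polynomial K) (RatFunc K) (minpoly K a)))) := by
  refine ⟨fun c _ => ?_, fun g hg => hW.map_eq_aeval_of_degree_lt hWω hg,
    fun r fs hdeg => hW.map_sum_mul_minpoly_pow hWω hvt _ fs hdeg⟩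
  simpa using hW.1.nsmul_map_minpoly_ne hWω hvt one_pos c

end VT
end
end

section
/- Let (K,ν) be a henselian valued field, ω a valuation transcendental extension of ν to K(x) with pair of definition (a,γ), and assume that (K(a)|K,ν̄) is a defectless extension. Let a = a₀, a₁, …, a_n be a complete distinguished chain for a. Then there exists i ∈ {0, …, n} such that (aᵢ,γ) is a minimal pair of definition for ω. -/
/- ---------------------------------------------------------------------------
Common definitions for formalizing "Minimal pairs, minimal fields and
implicit constant fields" (Dutta).

Valuations are formalized additively, as `AddValuation F (WithTop Γ)` where
`Γ` is a linearly ordered abelian group; the value `⊤` plays the role of the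
value `∞` of `0`.  The algebraic closure `K̄` of `K` is `AlgebraicClosure K`,
the rational function field `K(x)` is `RatFunc K`, and a fixed algebraic
closure of `K̄(x)` (equivalently, of `K(x)`) is
`Lhat K := AlgebraicClosure (RatFunc (AlgebraicClosure K))`.
--------------------------------------------------------------------------- -/

noncomputable section

open Polynomial

namespace VT

variable {K : Type} [Field K] {Γ : Type} [AddCommGroup Γ] [LinearOrder Γ] [IsOrderedAddMonoid Γ]

/-! Take the last `aᵢ` of the chain with `ν̄(a - aᵢ) ≥ γ`; then `ν̄_{a,γ} = ν̄_{aᵢ,γ}`.  If some `b`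
with `ν̄(aᵢ - b) ≥ γ` had smaller degree than `aᵢ`, then `aᵢ ∉ K` and the distinguished pair
`(aᵢ, aᵢ₊₁)` would give `ν̄(aᵢ - aᵢ₊₁) ≥ ν̄(aᵢ - b) ≥ γ`, so `aᵢ₊₁` would be a later element of the
chain within `γ` of `a`. -/

lemma AddValuation.exists_map_le_map_sum {R ι : Type*} [Ring R]
    (v : AddValuation R (WithTop Γ)) {s : Finset ι} (hs : s.Nonempty) (f : ι → R) :
    ∃ i ∈ s, v (f i) ≤ v (∑ j ∈ s, f j) := by
  obtain ⟨i, hi, hmin⟩ := s.exists_min_image (fun j => v (f j)) hs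
  exact ⟨i, hi, v.map_le_sum hmin⟩

lemma AddValuation.zero_le_map_natCast {R : Type*} [Ring R]
    (v : AddValuation R (WithTop Γ)) (n : ℕ) : 0 ≤ v (n : R) := by
  simpa using v.map_le_sum (s := Finset.range n) (f := fun _ => (1 : R)) (by simp)

section GaussVal

variable {R : Type*} [CommRing R] (v : AddValuation R (WithTop Γ)) (γ : Γ)

def gaussVal (q : R[X]) : WithTop Γ :=
  (Finset.range (q.natDegree + 1)).inf fun j => v (q.coeff j) + j • (γ : WithTop Γ)

variable {v γ}

lemma gaussVal_le (q : R[X]) (k : ℕ) : gaussVal v γ q ≤ v (q.coeff k) + k • (γ : WithTop Γ) := by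
  by_cases hk : k ≤ q.natDegree
  · exact Finset.inf_le (Finset.mem_range_succ_iff.mpr hk)
  · simp [coeff_eq_zero_of_natDegree_lt (not_le.mp hk)]

lemma gaussVal_le_gaussVal_taylor {c : R} (hc : (γ : WithTop Γ) ≤ v c) (q : R[X]) :
    gaussVal v γ q ≤ gaussVal v γ (taylor c q) := by
  refine Finset.le_inf fun i _ => ?_
  rw [taylor_coeff, eval_eq_sum_range]
  obtain ⟨m, -, hm⟩ := AddValuation.exists_map_le_map_sum v Finset.nonempty_range_add_one
    fun m => (hasseDeriv i q).coeff m * c ^ m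
  refine le_trans ?_ (add_le_add_left hm _)
  calc gaussVal v γ q
      ≤ v (q.coeff (m + i)) + (m + i) • (γ : WithTop Γ) := gaussVal_le q (m + i)
    _ = 0 + v (q.coeff (m + i)) + m • (γ : WithTop Γ) + i • (γ : WithTop Γ) := by
      rw [add_nsmul, zero_add, add_assoc]
    _ ≤ v ((m + i).choose i : R) + v (q.coeff (m + i)) + m • v c + i • (γ : WithTop Γ) := by
      gcongr
      exact AddValuation.zero_le_map_natCast v _
    _ = v ((hasseDeriv i q).coeff m * c ^ m) + i • (γ : WithTop Γ) := by
      rw [hasseDeriv_coeff, v.map_mul, v.map_mul, v.map_pow]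

lemma gaussVal_taylor {c : R} (hc : (γ : WithTop Γ) ≤ v c) (q : R[X]) :
    gaussVal v γ (taylor c q) = gaussVal v γ q := by
  refine le_antisymm ?_ (gaussVal_le_gaussVal_taylor hc q)
  have hc' : (γ : WithTop Γ) ≤ v (-c) := by rwa [v.map_neg]
  simpa [taylor_taylor] using gaussVal_le_gaussVal_taylor hc' (taylor c q)

end GaussVal

lemma isMonomialVal_iff {vbar : AddValuation (AlgebraicClosure K) (WithTop Γ)}
    {W : AddValuation (RatFunc (AlgebraicClosure K)) (WithTop Γ)} {a : AlgebraicClosure K}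
    {γ : Γ} : IsMonomialVal vbar W a γ ↔
      ∀ p, W (algebraMap _ (RatFunc (AlgebraicClosure K)) p) = gaussVal vbar γ (taylor a p) := by
  simp only [IsMonomialVal, gaussVal, natDegree_taylor]

lemma IsMonomialVal.of_le_map_sub {vbar : AddValuation (AlgebraicClosure K) (WithTop Γ)}
    {W : AddValuation (RatFunc (AlgebraicClosure K)) (WithTop Γ)} {a b : AlgebraicClosure K}
    {γ : Γ} (hW : IsMonomialVal vbar W a γ) (hab : (γ : WithTop Γ) ≤ vbar (a - b)) :
    IsMonomialVal vbar W b γ := by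
  rw [isMonomialVal_iff] at hW ⊢
  intro p
  have hba : (γ : WithTop Γ) ≤ vbar (b - a) := by rwa [vbar.map_sub_swap]
  rw [hW p, ← gaussVal_taylor hba, taylor_taylor, sub_add_cancel]

lemma degOver_pos (b : AlgebraicClosure K) : 0 < degOver K b :=
  minpoly.natDegree_pos (Algebra.IsIntegral.isIntegral b)

lemma degOver_algebraMap (k : K) : degOver K (algebraMap K (AlgebraicClosure K) k) = 1 := by
  rw [degOver, minpoly.eq_X_sub_C, natDegree_X_sub_C]

lemma degOver_le_of_isGreatest_of_chain {vbar : AddValuation (AlgebraicClosure K) (WithTop Γ)}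
    {n : ℕ} {as : Fin (n + 1) → AlgebraicClosure K}
    (hchain : ∀ i : Fin n, IsDistinguishedPair vbar (as i.castSucc) (as i.succ))
    (hlast : as (Fin.last n) ∈ Set.range (algebraMap K (AlgebraicClosure K)))
    {a : AlgebraicClosure K} {γ : Γ} {i : Fin (n + 1)}
    (hi : IsGreatest {j | (γ : WithTop Γ) ≤ vbar (a - as j)} i)
    {b : AlgebraicClosure K} (hb : (γ : WithTop Γ) ≤ vbar (as i - b)) :
    degOver K (as i) ≤ degOver K b := by
  by_contra! hlt
  have hi_last : i ≠ Fin.last n := by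
    rintro rfl
    obtain ⟨k, hk⟩ := hlast
    rw [← hk, degOver_algebraMap] at hlt
    exact (degOver_pos b).ne' (Nat.lt_one_iff.mp hlt)
  obtain ⟨j, rfl⟩ := Fin.exists_castSucc_eq.mpr hi_last
  have hnext : (γ : WithTop Γ) ≤ vbar (a - as j.succ) := by
    have hstep := hb.trans ((hchain j).2.1 b hlt)
    simpa using vbar.map_le_add hi.1 hstep
  exact (hi.2 hnext).not_gt Fin.castSucc_lt_succ

theorem statement_10_general {K : Type} [Field K] {Γ : Type} [AddCommGroup Γ] [LinearOrder Γ] [IsOrderedAddMonoid Γ]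
    (vbar : AddValuation (AlgebraicClosure K) (WithTop Γ))
    (ω : AddValuation (RatFunc K) (WithTop Γ))
    (a : AlgebraicClosure K) (γ : Γ)
    (hpair : IsPairOfDef vbar ω a γ)
    (n : ℕ) (as : Fin (n + 1) → AlgebraicClosure K)
    (h0 : as 0 = a)
    (hchain : ∀ i : Fin n, IsDistinguishedPair vbar (as i.castSucc) (as i.succ))
    (hlast : as (Fin.last n) ∈ Set.range (algebraMap K (AlgebraicClosure K))) :
    ∃ i : Fin (n + 1), IsMinimalPairOfDef vbar ω (as i) γ := by
  obtain ⟨W, hW, hext⟩ := hpair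
  obtain ⟨i, hi⟩ : ∃ i, IsGreatest {j | (γ : WithTop Γ) ≤ vbar (a - as j)} i := by
    have hne : (Finset.univ.filter fun j => (γ : WithTop Γ) ≤ vbar (a - as j)).Nonempty :=
      ⟨0, by simp [h0]⟩
    exact ⟨_, by simpa using Finset.isGreatest_max' _ hne⟩
  exact ⟨i, ⟨W, hW.of_le_map_sub hi.1, hext⟩,
    fun b hb => degOver_le_of_isGreatest_of_chain hchain hlast hi hb⟩

/-- Theorem: minimal pairs from complete distinguished chains.
Let `(K,ν)` be henselian, `ω` a valuation transcendental extension of `ν` to `K(x)`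
with pair of definition `(a,γ)`, and assume `(K(a)|K,ν̄)` is defectless, i.e.
`[K(a):K] = (ν̄K(a):νK) · [K(a)ν̄ : Kν]`.  If `a = a₀, a₁, …, a_n` is a complete
distinguished chain for `a`, then `(aᵢ,γ)` is a minimal pair of definition for `ω`
for some `i`. -/
theorem statement_10 {K : Type} [Field K] {Γ : Type} [AddCommGroup Γ] [LinearOrder Γ] [IsOrderedAddMonoid Γ]
    (vbar : AddValuation (AlgebraicClosure K) (WithTop Γ))
    (ω : AddValuation (RatFunc K) (WithTop Γ))
    (hhens : IsHenselianBase vbar)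
    (hvt : IsValuationTranscendental (algebraMap K (RatFunc K)) ω)
    (a : AlgebraicClosure K) (γ : Γ)
    (hpair : IsPairOfDef vbar ω a γ)
    (hdefectless : ∃ f' : ℕ,
      ResidueDegreeIs vbar (Set.range (algebraMap K (AlgebraicClosure K)))
        (IntermediateField.adjoin K {a} : Set (AlgebraicClosure K)) f' ∧
      degOver K a =
        (valueSubgroup vbar (Set.range (algebraMap K (AlgebraicClosure K)))).relIndex
          (valueSubgroup vbar
            (IntermediateField.adjoin K {a} : Set (AlgebraicClosure K))) * f')
    (n : ℕ) (as : Fin (n + 1) → AlgebraicClosure K)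
    (h0 : as 0 = a)
    (hchain : ∀ i : Fin n, IsDistinguishedPair vbar (as i.castSucc) (as i.succ))
    (hlast : as (Fin.last n) ∈ Set.range (algebraMap K (AlgebraicClosure K))) :
    ∃ i : Fin (n + 1), IsMinimalPairOfDef vbar ω (as i) γ :=
  statement_10_general vbar ω a γ hpair n as h0 hchain hlast

end VT
end
end
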